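/- arXiv:1411.5058 — 3 statements merged into one kernel-verified Lean document; each statement's English description precedes it below -/
import Mathlib

section
/- Let A₁, A₂, A₃ be symmetric positive semidefinite matrices with A₁ + A₂ + A₃ ≤ I. Then the average over all 6 permutations σ of {1,2,3} of A_{σ(1)}A_{σ(2)}A_{σ(3)} is at most (1/27)·I in the Loewner order. -/
/-!
The bound is a noncommutative sum-of-squares identity. With `d = 1 - (a + b + c)`,
`(1/27) • 1 - (1/6) • ∑_σ` equals a combination, with nonnegative real weights, of congruences
`l * x * l` where `x ∈ {a, b, c, d}` and each `l` is a self-adjoint affine expression in `a, b, c`.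
In a star-ordered ring every such congruence of a nonnegative element is nonnegative. Every `l`
multiplying `a`, `b` or `c` vanishes at `a = b = c = 1/3`, where the bound is attained.
-/

open scoped MatrixOrder

theorem Equiv.Perm.sum_fin_three {M : Type*} [AddCommMonoid M] (f : Fin 3 → Fin 3 → Fin 3 → M) :
    ∑ σ : Equiv.Perm (Fin 3), f (σ 0) (σ 1) (σ 2) =
      f 0 1 2 + f 0 2 1 + f 1 0 2 + f 1 2 0 + f 2 0 1 + f 2 1 0 := by
  have huniv : (Finset.univ : Finset (Equiv.Perm (Fin 3))) =
      {1, swap 1 2, swap 0 1, swap 0 1 * swap 1 2, swap 1 2 * swap 0 1, swap 0 2} := by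
    decide
  rw [huniv, Finset.sum_insert (by decide), Finset.sum_insert (by decide),
    Finset.sum_insert (by decide), Finset.sum_insert (by decide),
    Finset.sum_insert (by decide), Finset.sum_singleton]
  simp [Equiv.swap_apply_def, add_assoc]

section SumOfSquares

variable {R : Type*} [Ring R] [Algebra ℝ R]

noncomputable def sosPart (x y z : R) : R :=
  (2/9 : ℝ) • ((1 - (7/6 : ℝ) • x - (11/12 : ℝ) • (y + z)) * x *
      (1 - (7/6 : ℝ) • x - (11/12 : ℝ) • (y + z))) +
    (5/162 : ℝ) • ((x - (1/2 : ℝ) • (y + z)) * x * (x - (1/2 : ℝ) • (y + z))) +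
    (5/36 : ℝ) • ((y - z) * x * (y - z))

noncomputable def slackSosPart (d a b c : R) : R :=
  (1/27 : ℝ) • ((1 - (5/2 : ℝ) • (a + b + c)) * d * (1 - (5/2 : ℝ) • (a + b + c))) +
    (1/108 : ℝ) • ((a - b) * d * (a - b) + (b - c) * d * (b - c) + (c - a) * d * (c - a)) +
    (1/12 : ℝ) • (a * d * a + b * d * b + c * d * c)

theorem one_div_27_smul_sub_sum_mul_eq_sos (a b c : R) :
    (1/27 : ℝ) • (1 : R) - (1/6 : ℝ) • (a * b * c + a * c * b + b * a * c + b * c * a +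
        c * a * b + c * b * a) =
      sosPart a b c + sosPart b c a + sosPart c a b + slackSosPart (1 - (a + b + c)) a b c := by
  simp only [sosPart, slackSosPart]
  noncomm_ring
  module

variable [PartialOrder R] [StarRing R] [StarOrderedRing R] [PosSMulMono ℝ R]

theorem smul_conjugate_nonneg {r : ℝ} (hr : 0 ≤ r) {x : R} (hx : 0 ≤ x) {l : R}
    (hl : IsSelfAdjoint l) : 0 ≤ r • (l * x * l) :=
  smul_nonneg hr (hl.conjugate_nonneg hx)

variable [StarModule ℝ R]

theorem sosPart_nonneg {x y z : R} (hx : 0 ≤ x) (hy : IsSelfAdjoint y) (hz : IsSelfAdjoint z) :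
    0 ≤ sosPart x y z := by
  have hx' := IsSelfAdjoint.of_nonneg hx
  have hyz := hy.add hz
  refine add_nonneg (add_nonneg ?_ ?_) ?_ <;> refine smul_conjugate_nonneg (by norm_num) hx ?_
  · exact ((IsSelfAdjoint.one R).sub ((IsSelfAdjoint.all _).smul hx')).sub
      ((IsSelfAdjoint.all _).smul hyz)
  · exact hx'.sub ((IsSelfAdjoint.all _).smul hyz)
  · exact hy.sub hz

theorem slackSosPart_nonneg {d a b c : R} (hd : 0 ≤ d) (ha : IsSelfAdjoint a)
    (hb : IsSelfAdjoint b) (hc : IsSelfAdjoint c) : 0 ≤ slackSosPart d a b c := by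
  have hK : IsSelfAdjoint (1 - (5/2 : ℝ) • (a + b + c)) :=
    (IsSelfAdjoint.one R).sub ((IsSelfAdjoint.all _).smul ((ha.add hb).add hc))
  refine add_nonneg (add_nonneg (smul_conjugate_nonneg (by norm_num) hd hK)
    (smul_nonneg (by norm_num) ?_)) (smul_nonneg (by norm_num) ?_)
  · exact add_nonneg (add_nonneg ((ha.sub hb).conjugate_nonneg hd)
      ((hb.sub hc).conjugate_nonneg hd)) ((hc.sub ha).conjugate_nonneg hd)
  · exact add_nonneg (add_nonneg (ha.conjugate_nonneg hd) (hb.conjugate_nonneg hd))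
      (hc.conjugate_nonneg hd)

theorem smul_sum_perm_mul_le {A : Fin 3 → R} (hA : ∀ i, 0 ≤ A i) (hsum : A 0 + A 1 + A 2 ≤ 1) :
    (1/6 : ℝ) • ∑ σ : Equiv.Perm (Fin 3), A (σ 0) * A (σ 1) * A (σ 2) ≤ (1/27 : ℝ) • 1 := by
  have hsa (i : Fin 3) : IsSelfAdjoint (A i) := .of_nonneg (hA i)
  rw [← sub_nonneg, Equiv.Perm.sum_fin_three fun i j k ↦ A i * A j * A k,
    one_div_27_smul_sub_sum_mul_eq_sos]
  refine add_nonneg (add_nonneg (add_nonneg ?_ ?_) ?_) ?_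
  · exact sosPart_nonneg (hA 0) (hsa 1) (hsa 2)
  · exact sosPart_nonneg (hA 1) (hsa 2) (hsa 0)
  · exact sosPart_nonneg (hA 2) (hsa 0) (hsa 1)
  · exact slackSosPart_nonneg (sub_nonneg.mpr hsum) (hsa 0) (hsa 1) (hsa 2)

end SumOfSquares

theorem stmt7 {n : ℕ} (A : Fin 3 → Matrix (Fin n) (Fin n) ℝ)
    (hA : ∀ i, (A i).PosSemidef)
    (hsum : ((1 : Matrix (Fin n) (Fin n) ℝ) - (A 0 + A 1 + A 2)).PosSemidef) :
    ((1 / 27 : ℝ) • (1 : Matrix (Fin n) (Fin n) ℝ) -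
      (1 / 6 : ℝ) • ∑ σ : Equiv.Perm (Fin 3), A (σ 0) * A (σ 1) * A (σ 2)).PosSemidef :=
  Matrix.le_iff.mp <| smul_sum_perm_mul_le (fun i ↦ (hA i).nonneg) (Matrix.le_iff.mpr hsum)
end

section
/- Let A₁, A₂, A₃ be symmetric positive semidefinite matrices with A₁ + A₂ + A₃ ≤ I. Then the average over all 6 permutations σ of {1,2,3} of A_{σ(1)}A_{σ(2)}A_{σ(3)} is at least -(1/27)·I in the Loewner order. -/
/-!
Put `e = 1 - a - b - c`. The noncommutative polynomial `72 ∑_σ a_σ(1) a_σ(2) a_σ(3) + 16` has an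
explicit certificate as a nonnegative combination of conjugates `u * p * u` with `p ∈ {a, b, c, e}`
and `u` a self-adjoint polynomial in `a, b, c`. In any star-ordered ring such conjugates of
nonnegative elements are nonnegative, so the polynomial is nonnegative whenever `a, b, c, e` are;
for matrices this is the Loewner order, and dividing by `432` gives the bound `-1/27`.
-/

open Equiv

theorem sum_perm_fin_three {M : Type*} [AddCommMonoid M] (f : Fin 3 → Fin 3 → Fin 3 → M) :
    ∑ σ : Perm (Fin 3), f (σ 0) (σ 1) (σ 2) =
      f 0 1 2 + f 0 2 1 + f 1 0 2 + f 1 2 0 + f 2 0 1 + f 2 1 0 := by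
  -- listed so that, once each `σ i` is evaluated, the terms match the right-hand side
  rw [show (Finset.univ : Finset (Perm (Fin 3))) =
      {1, swap 1 2, swap 0 1, swap 0 1 * swap 1 2, swap 0 2 * swap 1 2, swap 0 2} by decide]
  simp +decide only [Finset.sum_insert, Finset.mem_insert, Finset.mem_singleton,
    Finset.sum_singleton, add_assoc]
  rfl

section Ring

variable {R : Type*} [Ring R]

def symmetrizedProduct (a b c : R) : R :=
  a * b * c + a * c * b + b * a * c + b * c * a + c * a * b + c * b * a

def sosSummand (x y z : R) : R :=
  (4 - 6 * x + 3 * y + 3 * z) * x * (4 - 6 * x + 3 * y + 3 * z) +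
    3 * ((2 * x - y - z) * x * (2 * x - y - z)) + 36 * ((y + z) * x * (y + z))

theorem symmetrizedProduct_sos (a b c : R) :
    72 * symmetrizedProduct a b c + 16 =
      sosSummand a b c + sosSummand b c a + sosSummand c a b + 16 * (1 - a - b - c) +
        24 * ((a - b) * (1 - a - b - c) * (a - b) + (a - c) * (1 - a - b - c) * (a - c) +
          (b - c) * (1 - a - b - c) * (b - c)) := by
  simp only [symmetrizedProduct, sosSummand]
  noncomm_ring
  simp only [zsmul_eq_mul, Int.cast_ofNat, mul_one]

theorem IsSelfAdjoint.ofNat_mul [StarRing R] {x : R} (hx : IsSelfAdjoint x) (n : ℕ)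
    [n.AtLeastTwo] : IsSelfAdjoint (ofNat(n) * x) := by
  simp [IsSelfAdjoint, hx.star_eq, (Commute.ofNat_left _ _).eq]

end Ring

section StarOrderedRing

variable {R : Type*} [Ring R] [PartialOrder R] [StarRing R] [StarOrderedRing R]

theorem ofNat_mul_nonneg {x : R} (hx : 0 ≤ x) (n : ℕ) [n.AtLeastTwo] : 0 ≤ ofNat(n) * x :=
  nsmul_eq_mul n x ▸ nsmul_nonneg hx n

theorem sosSummand_nonneg {x y z : R} (hx : 0 ≤ x) (hy : IsSelfAdjoint y)
    (hz : IsSelfAdjoint z) : 0 ≤ sosSummand x y z := by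
  have hx' : IsSelfAdjoint x := hx.isSelfAdjoint
  have hu₁ : IsSelfAdjoint (4 - 6 * x + 3 * y + 3 * z) :=
    (((IsSelfAdjoint.ofNat 4).sub (hx'.ofNat_mul 6)).add (hy.ofNat_mul 3)).add (hz.ofNat_mul 3)
  have hu₂ : IsSelfAdjoint (2 * x - y - z) := ((hx'.ofNat_mul 2).sub hy).sub hz
  exact add_nonneg (add_nonneg (hu₁.conjugate_nonneg hx)
    (ofNat_mul_nonneg (hu₂.conjugate_nonneg hx) 3))
    (ofNat_mul_nonneg ((hy.add hz).conjugate_nonneg hx) 36)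

theorem symmetrizedProduct_nonneg {a b c : R} (ha : 0 ≤ a) (hb : 0 ≤ b) (hc : 0 ≤ c)
    (habc : a + b + c ≤ 1) : 0 ≤ 72 * symmetrizedProduct a b c + 16 := by
  have ha' := ha.isSelfAdjoint
  have hb' := hb.isSelfAdjoint
  have hc' := hc.isSelfAdjoint
  have he : 0 ≤ 1 - a - b - c := by rwa [sub_sub, sub_sub, ← add_assoc, sub_nonneg]
  rw [symmetrizedProduct_sos]
  refine add_nonneg (add_nonneg (add_nonneg (add_nonneg (sosSummand_nonneg ha hb' hc')
    (sosSummand_nonneg hb hc' ha')) (sosSummand_nonneg hc ha' hb'))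
    (ofNat_mul_nonneg he 16)) (ofNat_mul_nonneg ?_ 24)
  exact add_nonneg (add_nonneg ((ha'.sub hb').conjugate_nonneg he)
    ((ha'.sub hc').conjugate_nonneg he)) ((hb'.sub hc').conjugate_nonneg he)

end StarOrderedRing

theorem stmt9 {n : ℕ} (A : Fin 3 → Matrix (Fin n) (Fin n) ℝ)
    (hA : ∀ i, (A i).PosSemidef)
    (hsum : ((1 : Matrix (Fin n) (Fin n) ℝ) - (A 0 + A 1 + A 2)).PosSemidef) :
    ((1 / 6 : ℝ) • ∑ σ : Equiv.Perm (Fin 3), A (σ 0) * A (σ 1) * A (σ 2) +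
      (1 / 27 : ℝ) • (1 : Matrix (Fin n) (Fin n) ℝ)).PosSemidef := by
  open scoped MatrixOrder in
  have hcert : (72 * symmetrizedProduct (A 0) (A 1) (A 2) + 16).PosSemidef :=
    Matrix.nonneg_iff_posSemidef.mp <|
      symmetrizedProduct_nonneg (hA 0).nonneg (hA 1).nonneg (hA 2).nonneg
        (Matrix.le_iff.mpr hsum)
  have hscale : (1 / 6 : ℝ) • ∑ σ : Equiv.Perm (Fin 3), A (σ 0) * A (σ 1) * A (σ 2) +
      (1 / 27 : ℝ) • (1 : Matrix (Fin n) (Fin n) ℝ) =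
      (1 / 432 : ℝ) • (72 * symmetrizedProduct (A 0) (A 1) (A 2) + 16) := by
    have hofNat (k : ℕ) [k.AtLeastTwo] :
        (ofNat(k) : Matrix (Fin n) (Fin n) ℝ) = (ofNat(k) : ℝ) • 1 := by
      rw [← Algebra.algebraMap_eq_smul_one, map_ofNat]
    rw [sum_perm_fin_three fun i j k ↦ A i * A j * A k, symmetrizedProduct, hofNat 72, hofNat 16,
      smul_mul_assoc, one_mul]
    module
  rw [hscale]
  exact hcert.smul (by norm_num)
end

section
/- For any two symmetric positive semidefinite n×n matrices A₁, A₂, (1/4)‖(A₁+A₂)²‖ ≥ (1/2)‖A₁A₂ + A₂A₁‖, i.e., the noncommutative AM-GM inequality holds for n = m = 2. -/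
open scoped Matrix.Norms.L2Operator
open RCLike
open scoped ComplexOrder

/-! Put `S = A + B` and `D = A - B`, so that `S * S - D * D = 2 (A * B + B * A)`. Positivity of
`A` and `B` squeezes the quadratic form of `D` between `± ⟪S x, x⟫`, whence `‖D‖ ≤ ‖S‖`, since the
norm of a symmetric operator is the supremum of its Rayleigh quotient. The quadratic form of
`S * S - D * D` is `‖S x‖ ^ 2 - ‖D x‖ ^ 2`, which lies between `-‖D‖ ^ 2 ‖x‖ ^ 2` and
`‖S‖ ^ 2 ‖x‖ ^ 2`; so `‖S * S - D * D‖ ≤ ‖S‖ ^ 2 = ‖S * S‖`. -/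

namespace ContinuousLinearMap

variable {𝕜 E : Type*} [RCLike 𝕜] [NormedAddCommGroup E] [InnerProductSpace 𝕜 E]

local notation "⟪" x ", " y "⟫" => inner 𝕜 x y

lemma reApplyInnerSelf_le_opNorm_mul_sq (T : E →L[𝕜] E) (x : E) :
    T.reApplyInnerSelf x ≤ ‖T‖ * ‖x‖ ^ 2 :=
  calc re ⟪T x, x⟫ ≤ ‖T x‖ * ‖x‖ := (re_le_norm _).trans (norm_inner_le_norm _ _)
    _ ≤ ‖T‖ * ‖x‖ * ‖x‖ := by gcongr; exact T.le_opNorm x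
    _ = ‖T‖ * ‖x‖ ^ 2 := by ring

lemma opNorm_le_of_abs_reApplyInnerSelf_le {T : E →L[𝕜] E}
    (hT : (T : E →ₗ[𝕜] E).IsSymmetric) {c : ℝ} (hc : 0 ≤ c)
    (h : ∀ x, |T.reApplyInnerSelf x| ≤ c * ‖x‖ ^ 2) : ‖T‖ ≤ c := by
  rw [T.norm_eq_iSup_rayleighQuotient hT]
  refine ciSup_le fun x ↦ ?_
  rw [rayleighQuotient, abs_div, abs_sq]
  exact div_le_of_le_mul₀ (sq_nonneg _) hc (h x)

lemma IsPositive.norm_sub_le_norm_add {A B : E →L[𝕜] E} (hA : A.IsPositive)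
    (hB : B.IsPositive) : ‖A - B‖ ≤ ‖A + B‖ := by
  refine opNorm_le_of_abs_reApplyInnerSelf_le ?_ (norm_nonneg _) fun x ↦ ?_
  · rw [toLinearMap_sub]; exact hA.isSymmetric.sub hB.isSymmetric
  have hAx := hA.2 x
  have hBx := hB.2 x
  have hle := (A + B).reApplyInnerSelf_le_opNorm_mul_sq x
  simp only [reApplyInnerSelf_apply, add_apply, sub_apply, inner_add_left, inner_sub_left,
    map_add, map_sub] at hAx hBx hle ⊢
  rw [abs_le]
  constructor <;> linarith

lemma norm_mul_self_sub_mul_self_le {S D : E →L[𝕜] E} (hS : (S : E →ₗ[𝕜] E).IsSymmetric)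
    (hD : (D : E →ₗ[𝕜] E).IsSymmetric) :
    ‖S * S - D * D‖ ≤ max (‖S‖ ^ 2) (‖D‖ ^ 2) := by
  refine opNorm_le_of_abs_reApplyInnerSelf_le ?_ (le_max_of_le_left (sq_nonneg _)) fun x ↦ ?_
  · rw [toLinearMap_sub, toLinearMap_mul, toLinearMap_mul]
    exact (hS.mul_of_commute hS (.refl _)).sub (hD.mul_of_commute hD (.refl _))
  have hquad : (S * S - D * D).reApplyInnerSelf x = ‖S x‖ ^ 2 - ‖D x‖ ^ 2 := by
    rw [reApplyInnerSelf_apply, sub_apply, inner_sub_left, map_sub, mul_apply_eq_comp,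
      mul_apply_eq_comp, ← coe_coe, hS, ← coe_coe D, hD, inner_self_eq_norm_sq,
      inner_self_eq_norm_sq]
  have hSx : ‖S x‖ ^ 2 ≤ ‖S‖ ^ 2 * ‖x‖ ^ 2 := by
    rw [← mul_pow]; gcongr; exact S.le_opNorm x
  have hDx : ‖D x‖ ^ 2 ≤ ‖D‖ ^ 2 * ‖x‖ ^ 2 := by
    rw [← mul_pow]; gcongr; exact D.le_opNorm x
  rw [hquad, abs_le]
  constructor <;> nlinarith [le_max_left (‖S‖ ^ 2) (‖D‖ ^ 2),
    le_max_right (‖S‖ ^ 2) (‖D‖ ^ 2), sq_nonneg ‖x‖, sq_nonneg ‖S x‖, sq_nonneg ‖D x‖]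

theorem IsPositive.two_mul_norm_mul_add_mul_le [CompleteSpace E] {A B : E →L[𝕜] E}
    (hA : A.IsPositive) (hB : B.IsPositive) : 2 * ‖A * B + B * A‖ ≤ ‖(A + B) ^ 2‖ := by
  have hS : IsSelfAdjoint (A + B) := hA.isSelfAdjoint.add hB.isSelfAdjoint
  have hD : IsSelfAdjoint (A - B) := hA.isSelfAdjoint.sub hB.isSelfAdjoint
  calc 2 * ‖A * B + B * A‖ = ‖(A + B) * (A + B) - (A - B) * (A - B)‖ := by
        rw [show (A + B) * (A + B) - (A - B) * (A - B) = (2 : 𝕜) • (A * B + B * A) by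
          rw [two_smul]; noncomm_ring, norm_smul, RCLike.norm_ofNat]
    _ ≤ max (‖A + B‖ ^ 2) (‖A - B‖ ^ 2) :=
        norm_mul_self_sub_mul_self_le hS.isSymmetric hD.isSymmetric
    _ = ‖A + B‖ ^ 2 := by
        rw [max_eq_left]
        exact pow_le_pow_left₀ (norm_nonneg _) (hA.norm_sub_le_norm_add hB) 2
    _ = ‖(A + B) ^ 2‖ := by rw [sq (A + B), hS.norm_mul_self, sq]

end ContinuousLinearMap

namespace Matrix

variable {𝕜 n : Type*} [RCLike 𝕜] [Fintype n] [DecidableEq n]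

lemma PosSemidef.isPositive_toEuclideanCLM {A : Matrix n n 𝕜} (hA : A.PosSemidef) :
    (toEuclideanCLM (n := n) (𝕜 := 𝕜) A).IsPositive :=
  isPositive_toEuclideanLin_iff.mpr hA

theorem PosSemidef.two_mul_norm_mul_add_mul_le {A B : Matrix n n 𝕜} (hA : A.PosSemidef)
    (hB : B.PosSemidef) : 2 * ‖A * B + B * A‖ ≤ ‖(A + B) ^ 2‖ := by
  simpa only [← map_mul, ← map_add, ← map_pow, l2_opNorm_toEuclideanCLM] using
    hA.isPositive_toEuclideanCLM.two_mul_norm_mul_add_mul_le hB.isPositive_toEuclideanCLM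

end Matrix

theorem stmt19 {n : ℕ} (A₁ A₂ : Matrix (Fin n) (Fin n) ℝ)
    (hA₁ : A₁.PosSemidef) (hA₂ : A₂.PosSemidef) :
    (1 / 4 : ℝ) * ‖(A₁ + A₂) ^ 2‖ ≥ (1 / 2 : ℝ) * ‖A₁ * A₂ + A₂ * A₁‖ := by
  linarith [hA₁.two_mul_norm_mul_add_mul_le hA₂]
end
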